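/- arXiv:1905.10406 — 7 statements merged into one kernel-verified Lean document; each statement's English description precedes it below -/
import Mathlib

section
/- Let m and n be positive integers with m < n and m odd, and let α be any real number. Then the sum over k from 1 to n of cos(α - (k-1)·2π/n)^m equals 0. -/
/-!
Writing `cos z = (e^{iz} + e^{-iz}) / 2` and expanding binomially, `cos z ^ m` is a combination
of the characters `e^{i t z}` with `t = 2j - m`. For odd `m` these frequencies are odd, hence
nonzero, and `|t| ≤ m < n`, so `n ∤ t`; the sum of such a character over the `n` equally spaced
angles is a geometric sum of a nontrivial `n`-th root of unity and vanishes.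
-/

open Real Finset

namespace Complex

lemma cos_pow_eq_sum_exp (m : ℕ) (z : ℂ) :
    cos z ^ m = ∑ j ∈ range (m + 1),
      (m.choose j / 2 ^ m : ℂ) * exp (((2 * j - m : ℤ) : ℂ) * z * I) := by
  rw [cos, div_pow, add_pow, sum_div]
  refine sum_congr rfl fun j hj => ?_
  rw [← exp_nat_mul, ← exp_nat_mul, ← exp_add,
    Nat.cast_sub (Nat.lt_succ_iff.mp (mem_range.mp hj))]
  push_cast
  ring_nf

lemma sum_range_exp_int_mul_eq_zero {n : ℕ} {t : ℤ} (ht : ¬ (n : ℤ) ∣ t) (β : ℂ) :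
    ∑ k ∈ range n, exp (t * (β - k * (2 * π / n)) * I) = 0 := by
  rcases eq_or_ne n 0 with rfl | hn
  · simp
  have hζ := isPrimitiveRoot_exp n hn
  set w := exp (2 * π * I / n) ^ (-t)
  have hw : w ≠ 1 := by rwa [Ne, hζ.zpow_eq_one_iff_dvd, dvd_neg]
  have hwn : w ^ n = 1 := by
    rw [← zpow_natCast, ← zpow_mul, mul_comm (-t), zpow_mul, zpow_natCast, hζ.pow_eq_one,
      one_zpow]
  have hterm (k : ℕ) : exp (t * (β - k * (2 * π / n)) * I) = exp (t * β * I) * w ^ k := by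
    rw [← zpow_natCast, ← zpow_mul, ← exp_int_mul, ← exp_add]
    congr 1
    push_cast
    field_simp
    ring
  rw [sum_congr rfl fun k _ => hterm k, ← mul_sum, geom_sum_eq hw, hwn, sub_self, zero_div,
    mul_zero]

end Complex

lemma Int.not_natCast_dvd_two_mul_sub_of_odd {j m n : ℕ} (hj : j ≤ m) (hm : Odd m)
    (hmn : m < n) :
    ¬ (n : ℤ) ∣ 2 * j - m := by
  obtain ⟨l, rfl⟩ := hm
  intro hdvd
  have := Int.eq_zero_of_abs_lt_dvd hdvd (by rw [abs_lt]; omega)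
  omega

lemma sum_Icc_one_natCast_sub_one {R M : Type*} [Ring R] [AddCommMonoid M] (n : ℕ) (f : R → M) :
    ∑ k ∈ Icc 1 n, f ((k : R) - 1) = ∑ k ∈ range n, f k := by
  rw [← Ico_add_one_right_eq_Icc, sum_Ico_eq_sum_range]
  simp

theorem cos_odd_pow_sum_general (m n : ℕ) (hmn : m < n) (hodd : Odd m) (α : ℝ) :
    ∑ k ∈ Finset.Icc 1 n, Real.cos (α - ((k : ℝ) - 1) * (2 * π / n)) ^ m = 0 := by
  rw [sum_Icc_one_natCast_sub_one n fun x => Real.cos (α - x * (2 * π / n)) ^ m]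
  apply Complex.ofReal_injective
  push_cast
  simp_rw [Complex.cos_pow_eq_sum_exp]
  rw [sum_comm]
  refine sum_eq_zero fun j hj => ?_
  rw [← mul_sum, Complex.sum_range_exp_int_mul_eq_zero
    (Int.not_natCast_dvd_two_mul_sub_of_odd (Nat.lt_succ_iff.mp (mem_range.mp hj)) hodd hmn),
    mul_zero]

theorem cos_odd_pow_sum (m n : ℕ) (hm : 0 < m) (hmn : m < n) (hodd : Odd m) (α : ℝ) :
    ∑ k ∈ Finset.Icc 1 n, Real.cos (α - ((k : ℝ) - 1) * (2 * π / n)) ^ m = 0 :=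
  cos_odd_pow_sum_general m n hmn hodd α
end

section
/- Let P_1, P_2, P_3 be the vertices of an equilateral triangle with center O and circumradius r, and let X be a point at distance ℓ from O. Then Σ_{i=1}^3 dist(X, P_i)^4 = 3(r^4 + ℓ^4 + 4r^2ℓ^2). -/
/-!
Put `v = X - O` and let `u₀, u₁, u₂` be the unit vectors towards the vertices. Then
`dist X Pₖ² = ℓ² + r² - 2r⟪v, uₖ⟫`. Squaring and summing, the linear terms cancel because
`∑ uₖ = 0`, and the quadratic terms give `4r² · (3/2)ℓ²` because the `uₖ` form a tight frame:
`∑ ⟪v, uₖ⟫² = (3/2)‖v‖²`. Hence the sum is `3(ℓ² + r²)² + 6r²ℓ²`.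
-/

open Real Finset
open scoped RealInnerProductSpace

theorem sum_norm_sub_smul_pow_four {E ι : Type*} [NormedAddCommGroup E] [InnerProductSpace ℝ E]
    (s : Finset ι) (u : ι → E) (hu : ∀ i ∈ s, ‖u i‖ = 1) (hsum : ∑ i ∈ s, u i = 0)
    (v : E) (c : ℝ) (hframe : ∑ i ∈ s, ⟪v, u i⟫ ^ 2 = c * ‖v‖ ^ 2) (r : ℝ) :
    ∑ i ∈ s, ‖v - r • u i‖ ^ 4 = s.card * (‖v‖ ^ 2 + r ^ 2) ^ 2 + 4 * c * r ^ 2 * ‖v‖ ^ 2 := by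
  have hlin : ∑ i ∈ s, ⟪v, u i⟫ = 0 := by rw [← inner_sum, hsum, inner_zero_right]
  have hterm : ∀ i ∈ s, ‖v - r • u i‖ ^ 4 =
      (‖v‖ ^ 2 + r ^ 2) ^ 2 - 4 * r * (‖v‖ ^ 2 + r ^ 2) * ⟪v, u i⟫ + 4 * r ^ 2 * ⟪v, u i⟫ ^ 2 := by
    intro i hi
    rw [show ‖v - r • u i‖ ^ 4 = (‖v - r • u i‖ ^ 2) ^ 2 by ring, norm_sub_sq_real, inner_smul_right,
      norm_smul, mul_pow, hu i hi, Real.norm_eq_abs, sq_abs]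
    ring
  rw [sum_congr rfl hterm, sum_add_distrib, sum_sub_distrib, sum_const, nsmul_eq_mul, ← mul_sum,
    ← mul_sum, hlin, hframe]
  ring

noncomputable def unitCircleVec (θ : ℝ) : EuclideanSpace ℝ (Fin 2) :=
  (WithLp.equiv 2 (Fin 2 → ℝ)).symm ![cos θ, sin θ]

theorem inner_unitCircleVec (v : EuclideanSpace ℝ (Fin 2)) (θ : ℝ) :
    ⟪v, unitCircleVec θ⟫ = v 0 * cos θ + v 1 * sin θ := by
  simp only [unitCircleVec, WithLp.equiv_symm_apply, PiLp.inner_apply, RCLike.inner_apply,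
    ringHom_apply, Fin.sum_univ_two, Matrix.cons_val_zero, Matrix.cons_val_one]
  ring

theorem norm_unitCircleVec (θ : ℝ) : ‖unitCircleVec θ‖ = 1 := by
  rw [EuclideanSpace.norm_eq]
  simp [unitCircleVec, Fin.sum_univ_two]

theorem cos_two_pi_div_three : cos (2 * π / 3) = -(1 / 2) := by
  rw [show 2 * π / 3 = π - π / 3 by ring, cos_pi_sub, cos_pi_div_three]

theorem sin_two_pi_div_three : sin (2 * π / 3) = √3 / 2 := by
  rw [show 2 * π / 3 = π - π / 3 by ring, sin_pi_sub, sin_pi_div_three]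

theorem cos_four_pi_div_three : cos (4 * π / 3) = -(1 / 2) := by
  rw [show 4 * π / 3 = π / 3 + π by ring, cos_add_pi, cos_pi_div_three]

theorem sin_four_pi_div_three : sin (4 * π / 3) = -(√3 / 2) := by
  rw [show 4 * π / 3 = π / 3 + π by ring, sin_add_pi, sin_pi_div_three]

theorem sum_range_three_unitCircleVec :
    ∑ k ∈ range 3, unitCircleVec (2 * k * π / 3) = 0 := by
  ext i
  fin_cases i <;> norm_num [sum_range_succ, unitCircleVec, cos_two_pi_div_three,
    sin_two_pi_div_three, cos_four_pi_div_three, sin_four_pi_div_three]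

theorem sum_range_three_inner_unitCircleVec_sq (v : EuclideanSpace ℝ (Fin 2)) :
    ∑ k ∈ range 3, ⟪v, unitCircleVec (2 * k * π / 3)⟫ ^ 2 = 3 / 2 * ‖v‖ ^ 2 := by
  have h3 : √3 ^ 2 = 3 := sq_sqrt (by norm_num)
  norm_num [sum_range_succ, inner_unitCircleVec, EuclideanSpace.norm_sq_eq, Fin.sum_univ_two,
    cos_two_pi_div_three, sin_two_pi_div_three, cos_four_pi_div_three, sin_four_pi_div_three]
  linear_combination (v 1) ^ 2 / 2 * h3

theorem sum_pow4_dist_equilateral (O X : EuclideanSpace ℝ (Fin 2)) (r ℓ : ℝ)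
    (P : ℕ → EuclideanSpace ℝ (Fin 2))
    (hP : ∀ k, P k = O + r • (WithLp.equiv 2 (Fin 2 → ℝ)).symm
      ![Real.cos (2 * k * π / 3), Real.sin (2 * k * π / 3)])
    (hX : dist X O = ℓ) :
    ∑ k ∈ Finset.range 3, dist X (P k) ^ 4 = 3 * (r ^ 4 + ℓ ^ 4 + 4 * r ^ 2 * ℓ ^ 2) := by
  have hdist : ∀ k, dist X (P k) = ‖(X - O) - r • unitCircleVec (2 * k * π / 3)‖ := by
    intro k
    rw [hP, dist_eq_norm, sub_add_eq_sub_sub, unitCircleVec]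
  simp_rw [hdist]
  rw [sum_norm_sub_smul_pow_four _ _ (fun k _ ↦ norm_unitCircleVec _) sum_range_three_unitCircleVec
    _ _ (sum_range_three_inner_unitCircleVec_sq _), ← dist_eq_norm, hX, card_range]
  ring
end

section
/- Let P_1, ..., P_4 be the vertices of a square with center O and circumradius r, and let X be a point at distance ℓ from O. Then Σ_{i=1}^4 dist(X, P_i)^6 = 4(r^2 + ℓ^2)(r^4 + ℓ^4 + 8r^2ℓ^2). -/
/-!
Write `P k = O + r • e(θ_k)` with unit vectors `e(θ_k)`, `θ_k = φ + kπ/2`, and `u = X - O`.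
Then `dist X (P k)² = ℓ² + r² - 2r⟪u, e(θ_k)⟫`, and the four inner products are `a, b, -a, -b`
with `a² + b² = ℓ²`, since `e(φ), e(φ + π/2)` is an orthonormal basis. In the sum of the cubes
the odd powers of `a` and `b` cancel, leaving `4s³ + 24 s r² ℓ²` with `s = ℓ² + r²`.
-/

open Real Finset
open scoped RealInnerProductSpace

noncomputable def unitVec (θ : ℝ) : EuclideanSpace ℝ (Fin 2) :=
  (WithLp.equiv 2 (Fin 2 → ℝ)).symm ![cos θ, sin θ]

lemma inner_unitVec (u : EuclideanSpace ℝ (Fin 2)) (θ : ℝ) :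
    ⟪u, unitVec θ⟫ = u 0 * cos θ + u 1 * sin θ := by
  simp [unitVec, PiLp.inner_apply, Fin.sum_univ_two, mul_comm]

lemma norm_unitVec (θ : ℝ) : ‖unitVec θ‖ = 1 := by
  simp [unitVec, EuclideanSpace.norm_eq, Fin.sum_univ_two]

lemma unitVec_add_pi (θ : ℝ) : unitVec (θ + π) = -unitVec θ := by
  ext i; fin_cases i <;> simp [unitVec, cos_add_pi, sin_add_pi]

lemma inner_unitVec_sq_add_inner_unitVec_add_pi_div_two_sq (u : EuclideanSpace ℝ (Fin 2)) (θ : ℝ) :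
    ⟪u, unitVec θ⟫ ^ 2 + ⟪u, unitVec (θ + π / 2)⟫ ^ 2 = ‖u‖ ^ 2 := by
  rw [inner_unitVec, inner_unitVec, cos_add_pi_div_two, sin_add_pi_div_two,
    EuclideanSpace.norm_sq_eq, Fin.sum_univ_two, Real.norm_eq_abs, Real.norm_eq_abs, sq_abs, sq_abs]
  linear_combination (u 0 ^ 2 + u 1 ^ 2) * cos_sq_add_sin_sq θ

lemma dist_add_smul_sq {E : Type*} [NormedAddCommGroup E] [InnerProductSpace ℝ E]
    (X O v : E) (r : ℝ) (hv : ‖v‖ = 1) :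
    dist X (O + r • v) ^ 2 = dist X O ^ 2 + r ^ 2 - 2 * r * ⟪X - O, v⟫ := by
  rw [dist_eq_norm, dist_eq_norm, sub_add_eq_sub_sub, norm_sub_sq_real, inner_smul_right,
    norm_smul, hv, Real.norm_eq_abs, mul_one, sq_abs]
  ring

theorem sum_pow6_dist_square (O X : EuclideanSpace ℝ (Fin 2)) (r ℓ φ : ℝ)
    (P : ℕ → EuclideanSpace ℝ (Fin 2))
    (hP : ∀ k, P k = O + r • (WithLp.equiv 2 (Fin 2 → ℝ)).symm
      ![Real.cos (2 * k * π / 4 + φ), Real.sin (2 * k * π / 4 + φ)])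
    (hX : dist X O = ℓ) :
    ∑ k ∈ Finset.range 4, dist X (P k) ^ 6 = 4 * (r ^ 2 + ℓ ^ 2) * (r ^ 4 + ℓ ^ 4 + 8 * r ^ 2 * ℓ ^ 2) := by
  have hdist (k : ℕ) : dist X (P k) ^ 6 =
      (ℓ ^ 2 + r ^ 2 - 2 * r * ⟪X - O, unitVec (2 * k * π / 4 + φ)⟫) ^ 3 := by
    rw [← hX, ← dist_add_smul_sq X O _ r (norm_unitVec _), ← pow_mul, hP k]
    rfl
  have angle (k : ℕ) (θ : ℝ) (h : (k : ℝ) * (π / 2) = θ) : 2 * k * π / 4 + φ = φ + θ := by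
    rw [← h]; ring
  set a := ⟪X - O, unitVec φ⟫
  set b := ⟪X - O, unitVec (φ + π / 2)⟫
  have hab : a ^ 2 + b ^ 2 = ℓ ^ 2 := by
    rw [inner_unitVec_sq_add_inner_unitVec_add_pi_div_two_sq, ← dist_eq_norm, hX]
  simp only [sum_range_succ, sum_range_zero, hdist]
  rw [angle 0 0 (by simp), angle 1 (π / 2) (by simp), angle 2 π (by push_cast; ring),
    angle 3 (π / 2 + π) (by push_cast; ring), add_zero, ← add_assoc, unitVec_add_pi,
    unitVec_add_pi, inner_neg_right, inner_neg_right]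
  linear_combination (24 * r ^ 2 * (ℓ ^ 2 + r ^ 2)) * hab
end

section
/- Let P_1, ..., P_5 be the vertices of a regular pentagon with center O and circumradius r, and let X be a point at distance ℓ from O. Then Σ_{i=1}^5 dist(X, P_i)^4 = 5(r^4 + ℓ^4 + 4r^2ℓ^2). -/
open Real Finset

/-!
Expanding `dist X P_k ^ 4` in the angle `θ_k = 2kπ/n + φ` of the vertex gives a trigonometric
polynomial of degree two. Summed over the vertices of a regular `n`-gon with `n ≥ 3`, its first
and second harmonics cancel, because the `m`-th powers of the `n`-th roots of unity sum to zero
unless `n ∣ m`; only `n` times the constant term survives.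
-/

theorem sum_exp_mul_polygon_angle_eq_zero {n m : ℕ} (hm : ¬ n ∣ m) (φ : ℝ) :
    ∑ k ∈ range n, Complex.exp (↑(m * (2 * k * π / n + φ)) * Complex.I) = 0 := by
  rcases Nat.eq_zero_or_pos n with rfl | hn
  · simp
  set ζ := Complex.exp (2 * π * Complex.I / n)
  have hζ : IsPrimitiveRoot ζ n := Complex.isPrimitiveRoot_exp n hn.ne'
  have hterm : ∀ k : ℕ, Complex.exp (↑(m * (2 * k * π / n + φ)) * Complex.I)
      = Complex.exp (↑(m * φ) * Complex.I) * (ζ ^ m) ^ k := by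
    intro k
    rw [← pow_mul, ← Complex.exp_nat_mul, ← Complex.exp_add]
    push_cast
    ring_nf
  have hζm : ζ ^ m ≠ 1 := by rwa [Ne, hζ.pow_eq_one_iff_dvd]
  have hζmn : (ζ ^ m) ^ n = 1 := by rw [← pow_mul, mul_comm, pow_mul, hζ.pow_eq_one, one_pow]
  simp only [hterm, ← mul_sum, geom_sum_eq hζm, hζmn, sub_self, zero_div, mul_zero]

theorem sum_cos_mul_polygon_angle_eq_zero {n m : ℕ} (hm : ¬ n ∣ m) (φ : ℝ) :
    ∑ k ∈ range n, cos (m * (2 * k * π / n + φ)) = 0 := by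
  simpa only [Complex.re_sum, Complex.exp_ofReal_mul_I_re, Complex.zero_re] using
    congrArg Complex.re (sum_exp_mul_polygon_angle_eq_zero hm φ)

theorem sum_sin_mul_polygon_angle_eq_zero {n m : ℕ} (hm : ¬ n ∣ m) (φ : ℝ) :
    ∑ k ∈ range n, sin (m * (2 * k * π / n + φ)) = 0 := by
  simpa only [Complex.im_sum, Complex.exp_ofReal_mul_I_im, Complex.zero_im] using
    congrArg Complex.im (sum_exp_mul_polygon_angle_eq_zero hm φ)

theorem sq_sub_cos_add_sq_sub_sin_sq (a b r θ : ℝ) :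
    ((a - r * cos θ) ^ 2 + (b - r * sin θ) ^ 2) ^ 2
      = (a ^ 2 + b ^ 2 + r ^ 2) ^ 2 + 2 * r ^ 2 * (a ^ 2 + b ^ 2)
        - 4 * r * (a ^ 2 + b ^ 2 + r ^ 2) * (a * cos θ + b * sin θ)
        + 2 * r ^ 2 * ((a ^ 2 - b ^ 2) * cos (2 * θ) + 2 * a * b * sin (2 * θ)) := by
  rw [cos_two_mul, sin_two_mul]
  linear_combination (r ^ 2 * (2 * (a ^ 2 + b ^ 2) + r ^ 2 * (cos θ ^ 2 + sin θ ^ 2 + 1))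
    - 4 * r ^ 3 * (a * cos θ + b * sin θ) + 4 * r ^ 2 * b ^ 2) * sin_sq_add_cos_sq θ

theorem EuclideanSpace.dist_sq_fin_two (x y : EuclideanSpace ℝ (Fin 2)) :
    dist x y ^ 2 = (x 0 - y 0) ^ 2 + (x 1 - y 1) ^ 2 := by
  rw [EuclideanSpace.dist_eq, sq_sqrt (by positivity), Fin.sum_univ_two, Real.dist_eq,
    Real.dist_eq, sq_abs, sq_abs]

noncomputable def regularPolygonVertex (O : EuclideanSpace ℝ (Fin 2)) (r φ : ℝ) (n k : ℕ) :
    EuclideanSpace ℝ (Fin 2) :=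
  O + r • (WithLp.equiv 2 (Fin 2 → ℝ)).symm
    ![cos (2 * k * π / n + φ), sin (2 * k * π / n + φ)]

theorem dist_regularPolygonVertex_sq (O X : EuclideanSpace ℝ (Fin 2)) (r φ : ℝ) (n k : ℕ) :
    dist X (regularPolygonVertex O r φ n k) ^ 2
      = (X 0 - O 0 - r * cos (2 * k * π / n + φ)) ^ 2
        + (X 1 - O 1 - r * sin (2 * k * π / n + φ)) ^ 2 := by
  rw [EuclideanSpace.dist_sq_fin_two]
  simp [regularPolygonVertex, sub_add_eq_sub_sub]

theorem sum_dist_pow_four_regularPolygonVertex {n : ℕ} (hn : 3 ≤ n)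
    (O X : EuclideanSpace ℝ (Fin 2)) (r φ : ℝ) :
    ∑ k ∈ range n, dist X (regularPolygonVertex O r φ n k) ^ 4
      = n * (r ^ 4 + dist X O ^ 4 + 4 * r ^ 2 * dist X O ^ 2) := by
  set a := X 0 - O 0
  set b := X 1 - O 1
  have hXO : dist X O ^ 2 = a ^ 2 + b ^ 2 := EuclideanSpace.dist_sq_fin_two X O
  have h1 : ¬ n ∣ 1 := fun h => by have := Nat.le_of_dvd one_pos h; omega
  have h2 : ¬ n ∣ 2 := fun h => by have := Nat.le_of_dvd two_pos h; omega
  have hc1 := sum_cos_mul_polygon_angle_eq_zero h1 φ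
  have hs1 := sum_sin_mul_polygon_angle_eq_zero h1 φ
  have hc2 := sum_cos_mul_polygon_angle_eq_zero h2 φ
  have hs2 := sum_sin_mul_polygon_angle_eq_zero h2 φ
  simp only [Nat.cast_one, one_mul, Nat.cast_ofNat] at hc1 hs1 hc2 hs2
  calc ∑ k ∈ range n, dist X (regularPolygonVertex O r φ n k) ^ 4
      = ∑ k ∈ range n, ((a - r * cos (2 * k * π / n + φ)) ^ 2
          + (b - r * sin (2 * k * π / n + φ)) ^ 2) ^ 2 := by
        refine sum_congr rfl fun k _ => ?_
        rw [show 4 = 2 * 2 from rfl, pow_mul, dist_regularPolygonVertex_sq]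
    _ = n * ((a ^ 2 + b ^ 2 + r ^ 2) ^ 2 + 2 * r ^ 2 * (a ^ 2 + b ^ 2)) := by
        simp only [sq_sub_cos_add_sq_sub_sin_sq, sum_add_distrib, sum_sub_distrib, ← mul_sum,
          hc1, hs1, hc2, hs2, sum_const, card_range, nsmul_eq_mul]
        ring
    _ = n * (r ^ 4 + dist X O ^ 4 + 4 * r ^ 2 * dist X O ^ 2) := by
        rw [show dist X O ^ 4 = (dist X O ^ 2) ^ 2 by ring, hXO]
        ring

theorem sum_pow4_dist_pentagon (O X : EuclideanSpace ℝ (Fin 2)) (r ℓ φ : ℝ)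
    (P : ℕ → EuclideanSpace ℝ (Fin 2))
    (hP : ∀ k, P k = O + r • (WithLp.equiv 2 (Fin 2 → ℝ)).symm
      ![Real.cos (2 * k * π / 5 + φ), Real.sin (2 * k * π / 5 + φ)])
    (hX : dist X O = ℓ) :
    ∑ k ∈ Finset.range 5, dist X (P k) ^ 4 = 5 * (r ^ 4 + ℓ ^ 4 + 4 * r ^ 2 * ℓ ^ 2) := by
  simpa [regularPolygonVertex, hP, hX] using
    sum_dist_pow_four_regularPolygonVertex (n := 5) (by norm_num) O X r φ
end

section
/- Let P_1, ..., P_5 be the vertices of a regular pentagon with center O and circumradius r, and let X be a point at distance ℓ from O. Then Σ_{i=1}^5 dist(X, P_i)^8 = 5(r^2 + ℓ^2)^2(r^4 + ℓ^4 + 14r^2ℓ^2) + 30 r^4 ℓ^4. -/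
/-!
Write `X - O = ℓ (cos ψ, sin ψ)`. By the law of cosines `dist X P_k ^ 2 = ℓ² + r² - 2rℓ cos θ_k`
with `θ_k = 2kπ/5 + φ - ψ`. Expanding the fourth power of this in `cos (j θ_k)`, `j ≤ 4`, every term
with `1 ≤ j ≤ 4` sums to zero over the five vertices (it is the real part of a geometric sum of a
nontrivial fifth root of unity), so only five times the constant term survives.
-/

open Real Finset

theorem sum_range_cos_two_pi_mul_div_add {n m : ℕ} (hm : ¬ n ∣ m) (c : ℝ) :
    ∑ k ∈ range n, cos (m * (2 * k * π / n) + c) = 0 := by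
  rcases eq_or_ne n 0 with rfl | hn
  · simp
  have hω := Complex.isPrimitiveRoot_exp n hn
  have hcos (k : ℕ) : cos (m * (2 * k * π / n) + c) =
      (Complex.exp (c * Complex.I) * (Complex.exp (2 * π * Complex.I / n) ^ m) ^ k).re := by
    rw [← Complex.exp_ofReal_mul_I_re, ← pow_mul, ← Complex.exp_nat_mul, ← Complex.exp_add]
    congr 2
    push_cast
    ring
  have hζn : (Complex.exp (2 * π * Complex.I / n) ^ m) ^ n = 1 := by
    rw [pow_right_comm, hω.pow_eq_one, one_pow]
  have hζ1 : Complex.exp (2 * π * Complex.I / n) ^ m ≠ 1 :=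
    fun h => hm (hω.pow_eq_one_iff_dvd m |>.mp h)
  simp only [hcos, ← Complex.re_sum, ← mul_sum, geom_sum_eq hζ1, hζn, sub_self, zero_div,
    mul_zero, Complex.zero_re]

theorem sub_mul_cos_pow_four (A B β : ℝ) :
    (A - B * cos β) ^ 4 = (A ^ 4 + 3 * A ^ 2 * B ^ 2 + 3 * B ^ 4 / 8)
      - (4 * A ^ 3 * B + 3 * A * B ^ 3) * cos β + (3 * A ^ 2 * B ^ 2 + B ^ 4 / 2) * cos (2 * β)
      - A * B ^ 3 * cos (3 * β) + B ^ 4 / 8 * cos (4 * β) := by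
  have h4 : cos (4 * β) = 2 * cos (2 * β) ^ 2 - 1 := by
    rw [← cos_two_mul]; ring_nf
  rw [h4, cos_three_mul, cos_two_mul]
  ring

theorem sum_range_sub_mul_cos_pow_four {n : ℕ} (hn : 5 ≤ n) (A B c : ℝ) :
    ∑ k ∈ range n, (A - B * cos (2 * k * π / n + c)) ^ 4
      = n * (A ^ 4 + 3 * A ^ 2 * B ^ 2 + 3 * B ^ 4 / 8) := by
  have hsum (j : ℕ) (hj₀ : 0 < j) (hj : j < n) :
      ∑ k ∈ range n, cos (j * (2 * k * π / n + c)) = 0 := by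
    simp only [mul_add]
    exact sum_range_cos_two_pi_mul_div_add (Nat.not_dvd_of_pos_of_lt hj₀ hj) _
  have h1 := hsum 1 (by norm_num) (by omega)
  have h2 := hsum 2 (by norm_num) (by omega)
  have h3 := hsum 3 (by norm_num) (by omega)
  have h4 := hsum 4 (by norm_num) (by omega)
  simp only [Nat.cast_one, one_mul, Nat.cast_ofNat] at h1 h2 h3 h4
  simp only [sub_mul_cos_pow_four, sum_add_distrib, sum_sub_distrib, ← mul_sum, h1, h2, h3, h4,
    sum_const, card_range, nsmul_eq_mul]
  ring

theorem EuclideanSpace.exists_eq_norm_mul_cos_sin (v : EuclideanSpace ℝ (Fin 2)) :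
    ∃ ψ, v 0 = ‖v‖ * cos ψ ∧ v 1 = ‖v‖ * sin ψ := by
  set z := Complex.orthonormalBasisOneI.repr.symm v
  have hz : ‖z‖ = ‖v‖ := LinearIsometryEquiv.norm_map _ v
  refine ⟨z.arg, ?_, ?_⟩
  · rw [← hz, Complex.norm_mul_cos_arg]; simp [z]
  · rw [← hz, Complex.norm_mul_sin_arg]; simp [z]

theorem EuclideanSpace.exists_dist_add_smul_cos_sin_sq (O X : EuclideanSpace ℝ (Fin 2)) :
    ∃ ψ, ∀ r θ : ℝ,
      dist X (O + r • (WithLp.equiv 2 (Fin 2 → ℝ)).symm ![cos θ, sin θ]) ^ 2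
        = dist X O ^ 2 + r ^ 2 - 2 * r * dist X O * cos (θ - ψ) := by
  obtain ⟨ψ, h₀, h₁⟩ := exists_eq_norm_mul_cos_sin (X - O)
  refine ⟨ψ, fun r θ => ?_⟩
  have hdist (Y : EuclideanSpace ℝ (Fin 2)) :
      dist X Y ^ 2 = (X 0 - Y 0) ^ 2 + (X 1 - Y 1) ^ 2 := by
    rw [EuclideanSpace.dist_eq, sq_sqrt (by positivity)]
    simp [Fin.sum_univ_two, Real.dist_eq, sq_abs]
  rw [← dist_eq_norm] at h₀ h₁
  simp only [PiLp.sub_apply] at h₀ h₁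
  rw [hdist, hdist, cos_sub]
  simp only [PiLp.add_apply, PiLp.smul_apply, smul_eq_mul, WithLp.equiv_symm_apply,
    Matrix.cons_val_zero, Matrix.cons_val_one]
  linear_combination (-2 * r * cos θ) * h₀ - (2 * r * sin θ) * h₁ + r ^ 2 * sin_sq_add_cos_sq θ

theorem sum_pow8_dist_pentagon (O X : EuclideanSpace ℝ (Fin 2)) (r ℓ φ : ℝ)
    (P : ℕ → EuclideanSpace ℝ (Fin 2))
    (hP : ∀ k, P k = O + r • (WithLp.equiv 2 (Fin 2 → ℝ)).symm
      ![Real.cos (2 * k * π / 5 + φ), Real.sin (2 * k * π / 5 + φ)])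
    (hX : dist X O = ℓ) :
    ∑ k ∈ Finset.range 5, dist X (P k) ^ 8 = 5 * (r ^ 2 + ℓ ^ 2) ^ 2 * (r ^ 4 + ℓ ^ 4 + 14 * r ^ 2 * ℓ ^ 2) + 30 * r ^ 4 * ℓ ^ 4 := by
  obtain ⟨ψ, hψ⟩ := EuclideanSpace.exists_dist_add_smul_cos_sin_sq O X
  calc ∑ k ∈ range 5, dist X (P k) ^ 8
      = ∑ k ∈ range 5, (ℓ ^ 2 + r ^ 2 - 2 * r * ℓ * cos (2 * k * π / (5 : ℕ) + (φ - ψ))) ^ 4 := by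
        refine sum_congr rfl fun k _ => ?_
        rw [show dist X (P k) ^ 8 = (dist X (P k) ^ 2) ^ 4 by ring, hP, hψ, hX, Nat.cast_ofNat,
          ← add_sub_assoc]
    _ = 5 * ((ℓ ^ 2 + r ^ 2) ^ 4 + 3 * (ℓ ^ 2 + r ^ 2) ^ 2 * (2 * r * ℓ) ^ 2
          + 3 * (2 * r * ℓ) ^ 4 / 8) := by
        rw [sum_range_sub_mul_cos_pow_four le_rfl, Nat.cast_ofNat]
    _ = _ := by ring
end

section
/- Let n ≥ 2 and 1 ≤ m ≤ n-1. Let P_1, ..., P_n be the vertices of a regular n-gon with center O and circumradius r, and let X be a point at distance ℓ from O. Then Σ_{i=1}^n dist(X, P_i)^{2m} = n·[ (r^2+ℓ^2)^m + Σ_{k=1}^{⌊m/2⌋} (m choose 2k)·(r^2+ℓ^2)^{m-2k}·(rℓ)^{2k}·(2k choose k) ]. -/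
/-!
By the law of cosines, `dist X (P i) ^ 2 = r ^ 2 + ℓ ^ 2 - r ℓ (2 cos (θᵢ - ψ))`, where
`θᵢ = 2iπ/n + φ` and `ψ` is the polar angle of `X - O`. Writing `2 cos θ = w + w⁻¹` with
`w = exp (θ I)`, the points `w` for the angles `θᵢ - ψ` are `u ζ ^ i` with `ζ` a primitive `n`-th
root of unity, and the binomial theorem expands `(w + w⁻¹) ^ j` into the powers `w ^ (2t - j)`.
Summed over `i` these vanish unless `2t = j`, because `|2t - j| ≤ j < n`. So `∑ᵢ (2 cos θᵢ) ^ j`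
is `n * j.choose (j / 2)` for even `j < n` and `0` for odd `j`, and a second binomial expansion
of `(r ^ 2 + ℓ ^ 2 - r ℓ (2 cos θᵢ)) ^ m` gives the formula.
-/

open Real Finset

theorem IsPrimitiveRoot.sum_mul_pow_zpow {K : Type*} [Field K] {ζ : K} {n : ℕ}
    (hζ : IsPrimitiveRoot ζ n) (u : K) {s : ℤ} (hs : s.natAbs < n) :
    ∑ i ∈ range n, (u * ζ ^ i) ^ s = if s = 0 then (n : K) else 0 := by
  split_ifs with h0
  · simp [h0]
  have hne : ζ ^ s ≠ 1 := by
    rw [Ne, hζ.zpow_eq_one_iff_dvd]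
    exact fun hdvd => h0 (Int.eq_zero_of_dvd_of_natAbs_lt_natAbs hdvd (by simpa using hs))
  have hroot : (ζ ^ s) ^ n = 1 := by
    rw [← zpow_natCast, ← zpow_mul, mul_comm, zpow_mul, hζ.zpow_eq_one, one_zpow]
  have hpow (i : ℕ) : (u * ζ ^ i) ^ s = u ^ s * (ζ ^ s) ^ i := by
    rw [mul_zpow, ← zpow_natCast, ← zpow_natCast, ← zpow_mul, ← zpow_mul, mul_comm (i : ℤ)]
  rw [sum_congr rfl fun i _ => hpow i, ← mul_sum, geom_sum_eq hne, hroot, sub_self, zero_div,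
    mul_zero]

theorem IsPrimitiveRoot.sum_add_inv_pow {K : Type*} [Field K] {ζ : K} {n : ℕ}
    (hζ : IsPrimitiveRoot ζ n) {u : K} (hu : u ≠ 0) {j : ℕ} (hj : j < n) :
    ∑ i ∈ range n, (u * ζ ^ i + (u * ζ ^ i)⁻¹) ^ j
      = if Even j then (n * j.choose (j / 2) : K) else 0 := by
  have hζ0 : ζ ≠ 0 := hζ.ne_zero (by omega)
  have hexpand (w : K) (hw : w ≠ 0) :
      (w + w⁻¹) ^ j = ∑ t ∈ range (j + 1), w ^ (2 * t - j : ℤ) * j.choose t := by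
    rw [add_pow]
    refine sum_congr rfl fun t ht => ?_
    have htj : t ≤ j := Nat.lt_succ_iff.mp (mem_range.mp ht)
    rw [inv_pow, ← zpow_natCast, ← zpow_natCast, ← zpow_neg, ← zpow_add₀ hw]
    push_cast [htj]
    ring_nf
  have hcoeff (t : ℕ) (ht : t ∈ range (j + 1)) :
      ∑ i ∈ range n, (u * ζ ^ i) ^ (2 * t - j : ℤ) * j.choose t
        = (if (2 * t - j : ℤ) = 0 then (n : K) else 0) * j.choose t := by
    rw [← sum_mul, hζ.sum_mul_pow_zpow u (by have := mem_range.mp ht; omega)]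
  rw [sum_congr rfl fun i _ => hexpand _ (mul_ne_zero hu (pow_ne_zero i hζ0)), sum_comm,
    sum_congr rfl hcoeff]
  split_ifs with hev
  · obtain ⟨k, rfl⟩ := hev
    rw [sum_eq_single k]
    · simp [show k + k = 2 * k by ring]
    · intro t _ htk
      rw [if_neg (by omega), zero_mul]
    · intro hk
      exact absurd (mem_range.2 (by omega)) hk
  · refine sum_eq_zero fun t _ => ?_
    rw [if_neg fun h => hev ⟨t, by omega⟩, zero_mul]

theorem sum_two_mul_cos_pow {n j : ℕ} (hj : j < n) (c : ℝ) :
    ∑ i ∈ range n, (2 * cos (2 * i * π / n + c)) ^ j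
      = if Even j then (n * j.choose (j / 2) : ℝ) else 0 := by
  have hζ := Complex.isPrimitiveRoot_exp n (by omega)
  have hcos (i : ℕ) : ((2 * cos (2 * i * π / n + c) : ℝ) : ℂ)
      = Complex.exp (c * Complex.I) * Complex.exp (2 * π * Complex.I / n) ^ i
        + (Complex.exp (c * Complex.I) * Complex.exp (2 * π * Complex.I / n) ^ i)⁻¹ := by
    rw [← Complex.exp_nat_mul, ← Complex.exp_add, ← Complex.exp_neg, Complex.ofReal_mul,
      Complex.ofReal_cos, Complex.ofReal_ofNat, Complex.two_cos]
    push_cast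
    ring_nf
  have hsum := hζ.sum_add_inv_pow (Complex.exp_ne_zero (c * Complex.I)) hj
  simp_rw [← hcos] at hsum
  split_ifs at hsum ⊢ <;> exact_mod_cast hsum

theorem Finset.sum_range_succ_ite_even {M : Type*} [AddCommMonoid M] (N : ℕ) (f : ℕ → M) :
    ∑ t ∈ range (N + 1), (if Even t then f t else 0) = ∑ k ∈ range (N / 2 + 1), f (2 * k) := by
  rw [← sum_filter]
  refine sum_nbij' (· / 2) (2 * ·) ?_ ?_ ?_ ?_ ?_ <;>
    simp only [mem_filter, mem_range, Nat.even_iff] <;> intro t ht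
  all_goals first | omega | rw [Nat.mul_div_cancel' (Nat.dvd_of_mod_eq_zero ht.2)]

theorem sum_add_mul_two_mul_cos_pow {n m : ℕ} (hm : m < n) (a b c : ℝ) :
    ∑ i ∈ range n, (a + b * (2 * cos (2 * i * π / n + c))) ^ m
      = n * ∑ k ∈ range (m / 2 + 1),
          m.choose (2 * k) * a ^ (m - 2 * k) * b ^ (2 * k) * (2 * k).choose k := by
  have hterm (t : ℕ) (ht : t ∈ range (m + 1)) :
      ∑ i ∈ range n, (b * (2 * cos (2 * i * π / n + c))) ^ t * a ^ (m - t) * m.choose t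
        = if Even t then n * (m.choose t * a ^ (m - t) * b ^ t * t.choose (t / 2)) else 0 := by
    have hcoef (i : ℕ) : (b * (2 * cos (2 * i * π / n + c))) ^ t * a ^ (m - t) * m.choose t
        = m.choose t * a ^ (m - t) * b ^ t * (2 * cos (2 * i * π / n + c)) ^ t := by ring
    rw [sum_congr rfl fun i _ => hcoef i, ← mul_sum,
      sum_two_mul_cos_pow ((mem_range.mp ht).trans_le hm) c]
    split_ifs <;> ring
  simp_rw [add_comm a, add_pow]
  rw [sum_comm, sum_congr rfl hterm, sum_range_succ_ite_even, mul_sum]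
  refine sum_congr rfl fun k _ => ?_
  rw [Nat.mul_div_cancel_left k two_pos]

theorem EuclideanSpace.exists_apply_eq_norm_mul_cos_sin (v : EuclideanSpace ℝ (Fin 2)) :
    ∃ ψ : ℝ, v 0 = ‖v‖ * cos ψ ∧ v 1 = ‖v‖ * sin ψ := by
  set z : ℂ := Complex.orthonormalBasisOneI.repr.symm v
  have hz : ‖z‖ = ‖v‖ := LinearIsometryEquiv.norm_map _ v
  refine ⟨z.arg, ?_, ?_⟩
  · rw [← hz, Complex.norm_mul_cos_arg]; simp [z]
  · rw [← hz, Complex.norm_mul_sin_arg]; simp [z]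

theorem EuclideanSpace.exists_dist_add_smul_sq_eq (O X : EuclideanSpace ℝ (Fin 2)) :
    ∃ ψ : ℝ, ∀ r θ : ℝ,
      dist X (O + r • (WithLp.equiv 2 (Fin 2 → ℝ)).symm ![cos θ, sin θ]) ^ 2
        = r ^ 2 + dist X O ^ 2 - 2 * r * dist X O * cos (θ - ψ) := by
  obtain ⟨ψ, h0, h1⟩ := exists_apply_eq_norm_mul_cos_sin (X - O)
  refine ⟨ψ, fun r θ => ?_⟩
  rw [dist_eq_norm X O]
  set ℓ := ‖X - O‖
  have e0 : X 0 - (O 0 + r * cos θ) = ℓ * cos ψ - r * cos θ := by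
    rw [← h0, PiLp.sub_apply]; ring
  have e1 : X 1 - (O 1 + r * sin θ) = ℓ * sin ψ - r * sin θ := by
    rw [← h1, PiLp.sub_apply]; ring
  simp only [EuclideanSpace.dist_sq_eq, Fin.sum_univ_two, Real.dist_eq, sq_abs, PiLp.add_apply,
    PiLp.smul_apply, WithLp.equiv_symm_apply, Matrix.cons_val_zero, Matrix.cons_val_one,
    smul_eq_mul]
  rw [e0, e1, cos_sub]
  linear_combination ℓ ^ 2 * sin_sq_add_cos_sq ψ + r ^ 2 * sin_sq_add_cos_sq θ

theorem sum_pow_dist_regular_ngon_general (n m : ℕ) (hn : 2 ≤ n) (hmn : m ≤ n - 1)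
    (O X : EuclideanSpace ℝ (Fin 2)) (r ℓ φ : ℝ)
    (P : ℕ → EuclideanSpace ℝ (Fin 2))
    (hP : ∀ k, P k = O + r • (WithLp.equiv 2 (Fin 2 → ℝ)).symm
      ![Real.cos (2 * k * π / n + φ), Real.sin (2 * k * π / n + φ)])
    (hX : dist X O = ℓ) :
    ∑ i ∈ Finset.range n, dist X (P i) ^ (2 * m)
      = n * ((r ^ 2 + ℓ ^ 2) ^ m
        + ∑ k ∈ Finset.Icc 1 (m / 2),
            (m.choose (2 * k) : ℝ) * (r ^ 2 + ℓ ^ 2) ^ (m - 2 * k) * (r * ℓ) ^ (2 * k)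
              * ((2 * k).choose k : ℝ)) := by
  obtain ⟨ψ, hψ⟩ := EuclideanSpace.exists_dist_add_smul_sq_eq O X
  have hdist (i : ℕ) : dist X (P i) ^ (2 * m)
      = (r ^ 2 + ℓ ^ 2 + -(r * ℓ) * (2 * cos (2 * i * π / n + (φ - ψ)))) ^ m := by
    rw [pow_mul, hP, hψ, hX, ← add_sub_assoc]
    ring
  rw [sum_congr rfl fun i _ => hdist i, sum_add_mul_two_mul_cos_pow (by omega),
    Nat.range_succ_eq_Icc_zero, ← insert_Icc_add_one_left_eq_Icc (Nat.zero_le _),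
    sum_insert (by simp)]
  simp [(even_two_mul _).neg_pow]

theorem sum_pow_dist_regular_ngon (n m : ℕ) (hn : 2 ≤ n) (hm : 1 ≤ m) (hmn : m ≤ n - 1)
    (O X : EuclideanSpace ℝ (Fin 2)) (r ℓ φ : ℝ)
    (P : ℕ → EuclideanSpace ℝ (Fin 2))
    (hP : ∀ k, P k = O + r • (WithLp.equiv 2 (Fin 2 → ℝ)).symm
      ![Real.cos (2 * k * π / n + φ), Real.sin (2 * k * π / n + φ)])
    (hX : dist X O = ℓ) :
    ∑ i ∈ Finset.range n, dist X (P i) ^ (2 * m)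
      = n * ((r ^ 2 + ℓ ^ 2) ^ m
        + ∑ k ∈ Finset.Icc 1 (m / 2),
            (m.choose (2 * k) : ℝ) * (r ^ 2 + ℓ ^ 2) ^ (m - 2 * k) * (r * ℓ) ^ (2 * k)
              * ((2 * k).choose k : ℝ)) :=
  sum_pow_dist_regular_ngon_general n m hn hmn O X r ℓ φ P hP hX
end

section
/- Let n ≥ 2 and 1 ≤ m ≤ n-1, and fix a regular n-gon with center O and circumradius r > 0. If S > n·r^{2m}, then the set of points X in the plane with Σ_{i=1}^n dist(X, P_i)^{2m} = S is a circle centered at O; if S = n·r^{2m} it is the single point {O}; and if S < n·r^{2m} it is empty. -/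
/-! Identify the plane with `ℂ`, so that the vertices are `O + ρ ζ ^ k` with `ζ = exp (2πi / n)` and
`|ρ| = r`, and put `w = X - O`. Then `|w - ρ ζ ^ k| ^ (2m) = |p(ζ ^ k)| ^ 2` for the polynomial
`p(x) = (w - ρ x) ^ m` of degree `m < n`. Summing `|p(x)| ^ 2` over the `n`-th roots
of unity gives `n` times the sum of the squared moduli of the coefficients of `p` (orthogonality of
characters), so the sum of the `2m`-th powers of the distances is
`n ∑ⱼ C(m, j)² |w| ^ (2(m - j)) r ^ (2j)`: a function of `|w| = dist X O` alone, strictly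
increasing, continuous and unbounded, with value `n r ^ (2m)` at `0`.
-/

open Real Finset ComplexConjugate Filter

theorem IsPrimitiveRoot.sum_pow_mul_conj_pow_pow {ζ : ℂ} {n : ℕ} (hζ : IsPrimitiveRoot ζ n)
    {i j : ℕ} (hi : i < n) (hj : j < n) :
    ∑ k ∈ range n, (ζ ^ i * conj ζ ^ j) ^ k = if i = j then (n : ℂ) else 0 := by
  have hζ0 : ζ ≠ 0 := hζ.ne_zero (by omega)
  rw [← Complex.inv_eq_conj (hζ.norm'_eq_one (by omega)), inv_pow, ← div_eq_mul_inv]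
  split_ifs with hij
  · simp [hij, hζ0]
  · have hne : ζ ^ i / ζ ^ j ≠ 1 := fun h =>
      hij (hζ.pow_inj hi hj ((div_eq_one_iff_eq (pow_ne_zero _ hζ0)).mp h))
    rw [geom_sum_eq hne, div_pow, ← pow_mul, ← pow_mul, mul_comm i, mul_comm j, pow_mul, pow_mul,
      hζ.pow_eq_one]
    simp

theorem IsPrimitiveRoot.sum_norm_sq_sum_mul_pow {ζ : ℂ} {n d : ℕ} (hζ : IsPrimitiveRoot ζ n)
    (hd : d ≤ n) (c : ℕ → ℂ) :
    ∑ k ∈ range n, ‖∑ j ∈ range d, c j * (ζ ^ k) ^ j‖ ^ 2 = n * ∑ j ∈ range d, ‖c j‖ ^ 2 := by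
  apply Complex.ofReal_injective
  push_cast
  simp only [← Complex.mul_conj', map_sum, map_mul, map_pow, Finset.sum_mul_sum]
  calc ∑ k ∈ range n, ∑ i ∈ range d, ∑ j ∈ range d,
        c i * (ζ ^ k) ^ i * (conj (c j) * (conj ζ ^ k) ^ j)
      = ∑ i ∈ range d, ∑ j ∈ range d,
          c i * conj (c j) * ∑ k ∈ range n, (ζ ^ i * conj ζ ^ j) ^ k := by
        rw [Finset.sum_comm]
        refine sum_congr rfl fun i _ => ?_
        rw [Finset.sum_comm]
        refine sum_congr rfl fun j _ => ?_
        rw [Finset.mul_sum]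
        refine sum_congr rfl fun k _ => ?_
        ring
    _ = _ := by
        rw [Finset.mul_sum]
        refine sum_congr rfl fun i hi => ?_
        have hi' : i < n := (mem_range.1 hi).trans_le hd
        rw [Finset.sum_congr rfl fun j hj => congrArg (c i * conj (c j) * ·)
          (hζ.sum_pow_mul_conj_pow_pow hi' ((mem_range.1 hj).trans_le hd))]
        simp [hi, mul_comm]

theorem IsPrimitiveRoot.sum_norm_sub_mul_pow_pow {ζ : ℂ} {n m : ℕ} (hζ : IsPrimitiveRoot ζ n)
    (hm : m < n) (w ρ : ℂ) :
    ∑ k ∈ range n, ‖w - ρ * ζ ^ k‖ ^ (2 * m) =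
      n * ∑ j ∈ range (m + 1), (m.choose j : ℝ) ^ 2 * (‖w‖ ^ 2) ^ (m - j) * (‖ρ‖ ^ 2) ^ j := by
  have hexpand : ∀ z : ℂ, (w - ρ * z) ^ m =
      ∑ j ∈ range (m + 1), (m.choose j * w ^ (m - j) * (-ρ) ^ j) * z ^ j := by
    intro z
    rw [sub_eq_add_neg, add_comm, add_pow]
    exact sum_congr rfl fun j _ => by ring
  calc ∑ k ∈ range n, ‖w - ρ * ζ ^ k‖ ^ (2 * m)
      = ∑ k ∈ range n,
          ‖∑ j ∈ range (m + 1), (m.choose j * w ^ (m - j) * (-ρ) ^ j) * (ζ ^ k) ^ j‖ ^ 2 := by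
        simp_rw [pow_mul', ← norm_pow, hexpand]
    _ = _ := by
        rw [hζ.sum_norm_sq_sum_mul_pow hm]
        simp only [norm_mul, norm_pow, norm_neg, Complex.norm_natCast]
        exact congrArg _ (sum_congr rfl fun j _ => by ring)

def powerSumProfile (n m : ℕ) (r t : ℝ) : ℝ :=
  n * ∑ j ∈ range (m + 1), (m.choose j : ℝ) ^ 2 * (t ^ 2) ^ (m - j) * (r ^ 2) ^ j

section powerSumProfile

variable (n m : ℕ) (r : ℝ)

theorem powerSumProfile_zero : powerSumProfile n m r 0 = n * r ^ (2 * m) := by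
  rw [powerSumProfile, sum_eq_single_of_mem m (self_mem_range_succ m)]
  · simp [pow_mul]
  · intro j hj hjm
    simp [zero_pow (show m - j ≠ 0 by grind)]

theorem continuous_powerSumProfile : Continuous (powerSumProfile n m r) := by
  unfold powerSumProfile
  fun_prop

variable {n m}

theorem strictMonoOn_powerSumProfile (hn : n ≠ 0) (hm : m ≠ 0) :
    StrictMonoOn (powerSumProfile n m r) (Set.Ici 0) := by
  intro s hs t _ hst
  refine mul_lt_mul_of_pos_left (sum_lt_sum (fun j _ => ?_) ⟨0, by simp, ?_⟩) (by positivity)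
  · gcongr
  · simpa using pow_lt_pow_left₀ (pow_lt_pow_left₀ hst hs two_ne_zero) (sq_nonneg s) hm

theorem tendsto_powerSumProfile_atTop (hn : n ≠ 0) (hm : m ≠ 0) :
    Tendsto (powerSumProfile n m r) atTop atTop := by
  refine tendsto_atTop_mono (fun t => ?_) (tendsto_pow_atTop (by omega : 2 * m ≠ 0))
  have hsum_nonneg : ∀ j ∈ range (m + 1),
      0 ≤ (m.choose j : ℝ) ^ 2 * (t ^ 2) ^ (m - j) * (r ^ 2) ^ j := fun j _ => by positivity
  calc t ^ (2 * m)
      ≤ ∑ j ∈ range (m + 1), (m.choose j : ℝ) ^ 2 * (t ^ 2) ^ (m - j) * (r ^ 2) ^ j := by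
        simpa [pow_mul] using single_le_sum hsum_nonneg (mem_range.2 m.succ_pos)
    _ ≤ powerSumProfile n m r t :=
        le_mul_of_one_le_left (sum_nonneg hsum_nonneg) (mod_cast Nat.one_le_iff_ne_zero.mpr hn)

end powerSumProfile

theorem setOf_comp_dist_eq_sphere {α : Type*} [PseudoMetricSpace α] {f : ℝ → ℝ}
    (hf : Set.InjOn f (Set.Ici 0)) (O : α) {ℓ : ℝ} (hℓ : 0 ≤ ℓ) :
    {X | f (dist X O) = f ℓ} = Metric.sphere O ℓ := by
  ext X
  exact ⟨fun h => hf dist_nonneg hℓ h, fun h => congrArg f h⟩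

theorem setOf_comp_dist_eq_of_strictMonoOn {α : Type*} [MetricSpace α] (O : α) {f : ℝ → ℝ}
    (hmono : StrictMonoOn f (Set.Ici 0)) (hcont : ContinuousOn f (Set.Ici 0))
    (htop : Tendsto f atTop atTop) (S : ℝ) :
    (f 0 < S → ∃ ℓ > 0, {X | f (dist X O) = S} = {X | dist X O = ℓ}) ∧
    (S = f 0 → {X | f (dist X O) = S} = {O}) ∧
    (S < f 0 → {X | f (dist X O) = S} = ∅) := by
  refine ⟨fun hS => ?_, fun hS => ?_, fun hS => ?_⟩
  · obtain ⟨ℓ, hℓ, rfl⟩ := intermediate_value_Ici hcont htop hS.le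
    refine ⟨ℓ, lt_of_le_of_ne hℓ ?_, setOf_comp_dist_eq_sphere hmono.injOn O hℓ⟩
    rintro rfl
    exact hS.ne rfl
  · rw [hS, setOf_comp_dist_eq_sphere hmono.injOn O le_rfl, Metric.sphere_zero]
  · refine Set.eq_empty_of_forall_notMem fun X hX => ?_
    have hle : f 0 ≤ f (dist X O) :=
      hmono.monotoneOn (Set.mem_Ici.2 le_rfl) (Set.mem_Ici.2 dist_nonneg) dist_nonneg
    exact (hS.trans_le (hle.trans_eq hX)).false

theorem Complex.orthonormalBasisOneI_repr_symm_cos_sin (θ : ℝ) :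
    Complex.orthonormalBasisOneI.repr.symm ((WithLp.equiv 2 (Fin 2 → ℝ)).symm
      ![Real.cos θ, Real.sin θ]) = Complex.exp (θ * Complex.I) := by
  simp [Complex.exp_mul_I]

theorem sum_dist_pow_regularPolygon {n m : ℕ} (hmn : m < n) (O : EuclideanSpace ℝ (Fin 2))
    (r φ : ℝ) (P : ℕ → EuclideanSpace ℝ (Fin 2))
    (hP : ∀ k, P k = O + r • (WithLp.equiv 2 (Fin 2 → ℝ)).symm
      ![Real.cos (2 * k * π / n + φ), Real.sin (2 * k * π / n + φ)])
    (X : EuclideanSpace ℝ (Fin 2)) :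
    ∑ i ∈ range n, dist X (P i) ^ (2 * m) = powerSumProfile n m r (dist X O) := by
  set e := Complex.orthonormalBasisOneI.repr.symm
  set ρ : ℂ := r * Complex.exp (φ * Complex.I)
  have hdist : ∀ Y, dist X Y = ‖e X - e Y‖ := fun Y => by rw [← dist_eq_norm, e.dist_map]
  have hvertex : ∀ k : ℕ, e (P k) = e O + ρ * Complex.exp (2 * π * Complex.I / n) ^ k := by
    intro k
    rw [hP, map_add, map_smul, Complex.orthonormalBasisOneI_repr_symm_cos_sin, Complex.real_smul,
      mul_assoc (r : ℂ), ← Complex.exp_nat_mul, ← Complex.exp_add]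
    congr 3
    push_cast
    ring
  have hρ : ‖ρ‖ ^ 2 = r ^ 2 := by
    rw [norm_mul, Complex.norm_exp_ofReal_mul_I, mul_one, Complex.norm_real, Real.norm_eq_abs,
      sq_abs]
  calc ∑ i ∈ range n, dist X (P i) ^ (2 * m)
      = ∑ i ∈ range n, ‖(e X - e O) - ρ * Complex.exp (2 * π * Complex.I / n) ^ i‖ ^ (2 * m) := by
        simp_rw [hdist, hvertex, sub_add_eq_sub_sub]
    _ = powerSumProfile n m r (dist X O) := by
        rw [(Complex.isPrimitiveRoot_exp n (by omega)).sum_norm_sub_mul_pow_pow hmn, hρ, ← hdist]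
        rfl

theorem locus_sum_pow_dist_regular_ngon_general (n m : ℕ) (hm : 1 ≤ m) (hmn : m ≤ n - 1)
    (O : EuclideanSpace ℝ (Fin 2)) (r φ : ℝ)
    (P : ℕ → EuclideanSpace ℝ (Fin 2))
    (hP : ∀ k, P k = O + r • (WithLp.equiv 2 (Fin 2 → ℝ)).symm
      ![Real.cos (2 * k * π / n + φ), Real.sin (2 * k * π / n + φ)])
    (S : ℝ) :
    (S > n * r ^ (2 * m) →
      ∃ ℓ > (0 : ℝ),
        {X : EuclideanSpace ℝ (Fin 2) | ∑ i ∈ Finset.range n, dist X (P i) ^ (2 * m) = S}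
          = {X | dist X O = ℓ}) ∧
    (S = n * r ^ (2 * m) →
      {X : EuclideanSpace ℝ (Fin 2) | ∑ i ∈ Finset.range n, dist X (P i) ^ (2 * m) = S}
        = {O}) ∧
    (S < n * r ^ (2 * m) →
      {X : EuclideanSpace ℝ (Fin 2) | ∑ i ∈ Finset.range n, dist X (P i) ^ (2 * m) = S}
        = ∅) := by
  have hmn' : m < n := by omega
  simp_rw [sum_dist_pow_regularPolygon hmn' O r φ P hP, ← powerSumProfile_zero n m r]
  exact setOf_comp_dist_eq_of_strictMonoOn O
    (strictMonoOn_powerSumProfile r (by omega) (by omega))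
    (continuous_powerSumProfile n m r).continuousOn
    (tendsto_powerSumProfile_atTop r (by omega) (by omega)) S

theorem locus_sum_pow_dist_regular_ngon (n m : ℕ) (hn : 2 ≤ n) (hm : 1 ≤ m) (hmn : m ≤ n - 1)
    (O : EuclideanSpace ℝ (Fin 2)) (r φ : ℝ) (hr : 0 < r)
    (P : ℕ → EuclideanSpace ℝ (Fin 2))
    (hP : ∀ k, P k = O + r • (WithLp.equiv 2 (Fin 2 → ℝ)).symm
      ![Real.cos (2 * k * π / n + φ), Real.sin (2 * k * π / n + φ)])
    (S : ℝ) :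
    (S > n * r ^ (2 * m) →
      ∃ ℓ > (0 : ℝ),
        {X : EuclideanSpace ℝ (Fin 2) | ∑ i ∈ Finset.range n, dist X (P i) ^ (2 * m) = S}
          = {X | dist X O = ℓ}) ∧
    (S = n * r ^ (2 * m) →
      {X : EuclideanSpace ℝ (Fin 2) | ∑ i ∈ Finset.range n, dist X (P i) ^ (2 * m) = S}
        = {O}) ∧
    (S < n * r ^ (2 * m) →
      {X : EuclideanSpace ℝ (Fin 2) | ∑ i ∈ Finset.range n, dist X (P i) ^ (2 * m) = S}
        = ∅) :=
  locus_sum_pow_dist_regular_ngon_general n m hm hmn O r φ P hP S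
end
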